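/- arXiv:math/0212220 — 5 statements merged into one kernel-verified Lean document; each statement's English description precedes it below -/
import Mathlib

section
/- For all integers a and d ≥ 1 one has δ(a,d) = (φ(gcd(a,d))/gcd(a,d)) · Σ_{r ≥ 1, gcd(1+ra,d)=1} Σ_{m ≥ 1, gcd(m,d)=1} μ(m)/(m·r·φ(m·r·d)). -/
/-!
Only squarefree `m` contribute to the inner series. Writing such an `m` as `e * m'` with
`e = gcd(m, d)` makes `m'` coprime to `d`, so that `lcm(m, d) = m' * d`, `μ(m) = μ(e) μ(m')`, and
the condition `gcd(m, d) ∣ a` becomes `e ∣ gcd(a, d)`. The inner series therefore factors as the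
finite sum `∑_{e ∣ gcd(a,d)} μ(e)/e = φ(gcd(a,d))/gcd(a,d)` times the series over `m'` coprime
to `d`.
-/

/-- The double series `δ(a,d)`: the average over primes `p` of the density of elements
of `𝔽_p^*` whose multiplicative order is `≡ a (mod d)`. -/
noncomputable def deltaDensity (a : ℤ) (d : ℕ) : ℝ :=
  ∑' r : ℕ, ∑' m : ℕ,
    if 1 ≤ r ∧ 1 ≤ m ∧ Int.gcd (1 + (r : ℤ) * a) d = 1 ∧ ((Nat.gcd m d : ℤ) ∣ a) then
      (ArithmeticFunction.moebius m : ℝ) /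
        ((m : ℝ) * (r : ℝ) * (Nat.totient (r * Nat.lcm m d) : ℝ))
    else 0

open ArithmeticFunction
open scoped Nat ArithmeticFunction.Moebius

theorem Nat.sum_divisors_moebius_div_eq_totient_div (n : ℕ) (hn : n ≠ 0) :
    ∑ e ∈ n.divisors, (μ e : ℝ) / e = (φ n : ℝ) / n := by
  have hφ := (sum_eq_iff_sum_mul_moebius_eq (R := ℝ) (f := fun k => (φ k : ℝ))
      (g := fun k => (k : ℝ))).mp (fun k _ => mod_cast Nat.sum_totient k) n hn.bot_lt
  rw [Nat.sum_divisorsAntidiagonal (f := fun x y => (μ x : ℝ) * (y : ℝ))] at hφ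
  rw [eq_div_iff (mod_cast hn), ← hφ, Finset.sum_mul]
  refine Finset.sum_congr rfl fun e he => ?_
  obtain ⟨hen, -⟩ := Nat.mem_divisors.mp he
  rw [Nat.cast_div hen (mod_cast (Nat.pos_of_dvd_of_pos hen hn.bot_lt).ne')]
  ring

theorem Nat.gcd_mul_eq_of_dvd_of_coprime {e m d : ℕ} (he : e ∣ d) (hm : m.Coprime d) :
    (e * m).gcd d = e := by
  rw [hm.gcd_mul_right_cancel, Nat.gcd_eq_left he]

theorem Nat.lcm_mul_eq_of_dvd_of_coprime {e m d : ℕ} (he : e ∣ d) (hm : m.Coprime d)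
    (hd : d ≠ 0) : (e * m).lcm d = m * d := by
  have h := Nat.gcd_mul_lcm (e * m) d
  rw [Nat.gcd_mul_eq_of_dvd_of_coprime he hm] at h
  exact Nat.eq_of_mul_eq_mul_left (Nat.pos_of_dvd_of_pos he hd.bot_lt) (by rw [h]; ring)

theorem tsum_eq_tsum_dvd_mul_coprime {M : Type*} [AddCommMonoid M] [TopologicalSpace M]
    {d : ℕ} (hd : d ≠ 0) (F : ℕ → M) (hF : ∀ m, F m ≠ 0 → Squarefree m) :
    ∑' m, F m = ∑' p : ℕ × ℕ, if p.1 ∣ d ∧ p.2.Coprime d then F (p.1 * p.2) else 0 := by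
  refine tsum_eq_tsum_of_ne_zero_bij (fun p => p.1.1 * p.1.2) ?_ ?_ ?_
  · rintro ⟨⟨e₁, m₁⟩, h₁⟩ ⟨⟨e₂, m₂⟩, h₂⟩ (h : e₁ * m₁ = e₂ * m₂)
    obtain ⟨⟨he₁ : e₁ ∣ d, hm₁ : m₁.Coprime d⟩, -⟩ := ite_ne_right_iff.mp h₁
    obtain ⟨⟨he₂ : e₂ ∣ d, hm₂ : m₂.Coprime d⟩, -⟩ := ite_ne_right_iff.mp h₂
    have he : e₁ = e₂ := by
      rw [← Nat.gcd_mul_eq_of_dvd_of_coprime he₁ hm₁, ← Nat.gcd_mul_eq_of_dvd_of_coprime he₂ hm₂, h]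
    subst he
    simpa using Nat.eq_of_mul_eq_mul_left (Nat.pos_of_dvd_of_pos he₁ hd.bot_lt) h
  · intro m hm
    have hsq := hF m hm
    have hdiv : m.gcd d * (m / m.gcd d) = m := Nat.mul_div_cancel' (Nat.gcd_dvd_left m d)
    have hcond : m.gcd d ∣ d ∧ (m / m.gcd d).Coprime d :=
      ⟨Nat.gcd_dvd_right m d, Nat.coprime_div_gcd_of_squarefree hsq hd⟩
    exact ⟨⟨(m.gcd d, m / m.gcd d), by rwa [Function.mem_support, if_pos hcond, hdiv]⟩, hdiv⟩
  · rintro ⟨⟨e, m⟩, h⟩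
    exact (if_pos (ite_ne_right_iff.mp h).1).symm

theorem tsum_mul_tsum_of_support_finite {α β : Type*} {c : α → ℝ} (hc : c.support.Finite)
    (H : β → ℝ) : (∑' a, c a) * ∑' b, H b = ∑' p : α × β, c p.1 * H p.2 := by
  by_cases hH : Summable H
  · have hc' : Summable (fun a => ‖c a‖) := (summable_of_hasFiniteSupport hc).norm
    exact tsum_mul_tsum_of_summable_norm hc' hH.norm
  rw [tsum_eq_zero_of_not_summable hH, mul_zero]
  by_cases hc0 : c = 0
  · simp [hc0]
  obtain ⟨a, ha⟩ := Function.ne_iff.mp hc0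
  refine (tsum_eq_zero_of_not_summable fun hs => hH ?_).symm
  exact (summable_mul_left_iff ha).mp (hs.comp_injective (Prod.mk_right_injective a))

theorem Nat.tsum_ite_dvd_moebius_div_eq_totient_div (n : ℕ) (hn : n ≠ 0) :
    ∑' e : ℕ, (if e ∣ n then (μ e : ℝ) / e else 0) = (φ n : ℝ) / n := by
  rw [tsum_eq_sum (s := n.divisors) fun e he => if_neg fun h => he (Nat.mem_divisors.mpr ⟨h, hn⟩),
    ← Nat.sum_divisors_moebius_div_eq_totient_div n hn]
  exact Finset.sum_congr rfl fun e he => if_pos (Nat.dvd_of_mem_divisors he)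

section DeltaTerms

variable (a : ℤ) (d r : ℕ)

noncomputable def deltaTerm (m : ℕ) : ℝ :=
  if 1 ≤ m ∧ ((m.gcd d : ℤ) ∣ a) then (μ m : ℝ) / (m * r * φ (r * m.lcm d)) else 0

noncomputable def coprimeTerm (m : ℕ) : ℝ :=
  if 1 ≤ m ∧ m.gcd d = 1 then (μ m : ℝ) / (m * r * φ (m * r * d)) else 0

variable {a d r}

theorem squarefree_of_deltaTerm_ne_zero {m : ℕ} (h : deltaTerm a d r m ≠ 0) : Squarefree m := by
  obtain ⟨-, h⟩ := ite_ne_right_iff.mp h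
  exact moebius_ne_zero_iff_squarefree.mp fun hμ => h (by simp [hμ])

theorem ite_deltaTerm_mul_eq (hd : d ≠ 0) (e m : ℕ) :
    (if e ∣ d ∧ m.Coprime d then deltaTerm a d r (e * m) else 0) =
      (if e ∣ Int.gcd a d then (μ e : ℝ) / e else 0) * coprimeTerm d r m := by
  by_cases h : e ∣ d ∧ m.Coprime d
  · obtain ⟨he, hm⟩ := h
    have he0 : e ≠ 0 := ne_zero_of_dvd_ne_zero hd he
    have hea : ((e : ℤ) ∣ a) ↔ e ∣ Int.gcd a d := by
      rw [Int.dvd_gcd_iff]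
      simp [Int.natCast_dvd_natCast.mpr he]
    have hμ : (μ (e * m) : ℝ) = μ e * μ m := mod_cast
      isMultiplicative_moebius.map_mul_of_coprime (Nat.Coprime.coprime_dvd_left he hm.symm)
    rw [if_pos ⟨he, hm⟩, deltaTerm, coprimeTerm, Nat.gcd_mul_eq_of_dvd_of_coprime he hm,
      Nat.lcm_mul_eq_of_dvd_of_coprime he hm hd, hμ]
    have hem : 1 ≤ e * m ↔ 1 ≤ m := by
      simp only [Nat.one_le_iff_ne_zero, mul_ne_zero_iff, he0, true_and, ne_eq, not_false_eq_true]
    simp only [hea, hem, Nat.coprime_iff_gcd_eq_one.mp hm, and_true]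
    by_cases hg : e ∣ Int.gcd a d <;> by_cases hm1 : 1 ≤ m <;> simp only [hg, hm1, and_self,
      and_true, and_false, if_true, if_false, zero_mul, mul_zero]
    rw [div_mul_div_comm, show r * (m * d) = m * r * d by ring]
    push_cast
    ring
  · have hg : e ∣ Int.gcd a d → ¬(1 ≤ m ∧ m.gcd d = 1) := fun hg hm =>
      h ⟨hg.trans (Int.natCast_dvd_natCast.mp (Int.gcd_dvd_right a d)), hm.2⟩
    rw [if_neg h, coprimeTerm]
    by_cases he : e ∣ Int.gcd a d <;> simp [he, hg]

theorem tsum_deltaTerm (hd : d ≠ 0) :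
    ∑' m, deltaTerm a d r m = (φ (Int.gcd a d) : ℝ) / Int.gcd a d * ∑' m, coprimeTerm d r m := by
  have hg : Int.gcd a d ≠ 0 := fun h => hd (mod_cast (Int.gcd_eq_zero_iff.mp h).2)
  have hfin : (fun e : ℕ => if e ∣ Int.gcd a d then (μ e : ℝ) / e else 0).support.Finite :=
    (Int.gcd a d).divisors.finite_toSet.subset fun e he =>
      Nat.mem_divisors.mpr ⟨(ite_ne_right_iff.mp he).1, hg⟩
  rw [tsum_eq_tsum_dvd_mul_coprime hd _ fun m => squarefree_of_deltaTerm_ne_zero,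
    tsum_congr fun p : ℕ × ℕ => ite_deltaTerm_mul_eq (a := a) (r := r) hd p.1 p.2,
    ← tsum_mul_tsum_of_support_finite hfin, Nat.tsum_ite_dvd_moebius_div_eq_totient_div _ hg]

end DeltaTerms

/-- `δ(a,d) = (φ(gcd(a,d))/gcd(a,d)) · Σ_{r ≥ 1, gcd(1+ra,d)=1} Σ_{m ≥ 1, gcd(m,d)=1}
μ(m)/(m·r·φ(m·r·d))`. -/
theorem deltaDensity_eq (a : ℤ) (d : ℕ) (hd : 1 ≤ d) :
    deltaDensity a d =
      ((Nat.totient (Int.gcd a d) : ℝ) / (Int.gcd a d : ℝ)) *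
        ∑' r : ℕ, ∑' m : ℕ,
          if 1 ≤ r ∧ 1 ≤ m ∧ Int.gcd (1 + (r : ℤ) * a) d = 1 ∧ Nat.gcd m d = 1 then
            (ArithmeticFunction.moebius m : ℝ) /
              ((m : ℝ) * (r : ℝ) * (Nat.totient (m * r * d) : ℝ))
          else 0 := by
  rw [deltaDensity, ← tsum_mul_left]
  refine tsum_congr fun r => ?_
  by_cases hr : 1 ≤ r ∧ Int.gcd (1 + (r : ℤ) * a) d = 1
  · simp only [hr.1, hr.2, true_and]
    exact tsum_deltaTerm (r := r) (Nat.one_le_iff_ne_zero.mp hd)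
  · have hoff : ∀ {P Q : Prop}, ¬(1 ≤ r ∧ P ∧ Int.gcd (1 + (r : ℤ) * a) d = 1 ∧ Q) :=
      fun h => hr ⟨h.1, h.2.2.1⟩
    simp only [hoff, if_false, tsum_zero, mul_zero]
end

section
/- For every integer d ≥ 1 one has ρ(0,d) = 1/(d·φ(d)). Moreover ρ(d,2d) = ρ(0,2d) if d is odd, and ρ(d,2d) = 3·ρ(0,2d) if d is even. -/
/-- Artin's constant `A = Π_p (1 - 1/(p(p-1)))`. -/
noncomputable def artinConst : ℝ :=
  ∏' p : Nat.Primes, (1 - 1 / (((p : ℕ) : ℝ) * (((p : ℕ) : ℝ) - 1)))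

/-- `r(t) = (1/t²)·Π_{p | t} (p²−1)/(p²−p−1)`. -/
noncomputable def rFun (t : ℕ) : ℝ :=
  (1 / (t : ℝ) ^ 2) *
    ∏ p ∈ t.primeFactors, (((p : ℝ) ^ 2 - 1) / ((p : ℝ) ^ 2 - (p : ℝ) - 1))

/-- `ρ(a,d) = A · Σ_{t ≥ 1, t ≡ a (mod d)} r(t)`: the average over primes `p` of the
density of elements of `𝔽_p^*` whose index is `≡ a (mod d)`. -/
noncomputable def rhoDensity (a : ℤ) (d : ℕ) : ℝ :=
  artinConst * ∑' t : ℕ, if 1 ≤ t ∧ (t : ℤ) ≡ a [ZMOD (d : ℤ)] then rFun t else 0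

/-!
Write `c_p = (p² - 1)/(p² - p - 1)`, so that `r(t) = t⁻² ∏_{p ∣ t} c_p`. For every `d ≠ 0`,
`r(dn) = r(d) r_d(n)` with `r_d(n) = n⁻² ∏_{p ∣ n, p ∤ d} c_p`, and `r_d` is multiplicative. Its
Euler factor at `p` is `(1 - 1/(p(p-1)))⁻¹` if `p ∤ d` and `(1 - p⁻²)⁻¹` if `p ∣ d`. For `d = 1`
this gives `A · ∑ r = 1`. Since `t ≡ 0 (mod d)` means `t = dn`, `ρ(0,d) = A r(d) ∑ r_d` differs
from `A ∑ r = 1` only through the Euler factors at `p ∣ d`, and these collapse to `1/(d φ(d))`.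

Similarly `t ≡ d (mod 2d)` means `t = dn` with `n` odd. Splitting off the Euler factor at `2` of
`r_{2d}`, which is `4/3`, shows `ρ(0,2d) = r_d(2) · (4/3) · ρ(d,2d)`, and `r_d(2)` is `3/4` or `1/4`
according as `d` is odd or even.
-/

open Finset

namespace ArithmeticFunction

variable {R : Type*}

noncomputable def coprimeTo [Zero R] (f : ArithmeticFunction R) (p : ℕ) : ArithmeticFunction R :=
  ⟨fun n => if n.Coprime p then f n else 0, by simp⟩

theorem coprimeTo_apply [Zero R] (f : ArithmeticFunction R) (p n : ℕ) :
    f.coprimeTo p n = if n.Coprime p then f n else 0 := rfl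

theorem IsMultiplicative.coprimeTo [MonoidWithZero R] {f : ArithmeticFunction R}
    (hf : f.IsMultiplicative) (p : ℕ) :
    (f.coprimeTo p).IsMultiplicative := by
  refine ⟨by simp [coprimeTo_apply, hf.map_one], fun {m n} hmn => ?_⟩
  simp only [coprimeTo_apply, Nat.coprime_mul_iff_left, hf.map_mul_of_coprime hmn]
  split_ifs <;> simp_all

section Normed

variable [NormedCommRing R] [CompleteSpace R]

omit [CompleteSpace R] in
theorem summable_norm_coprimeTo {f : ArithmeticFunction R} (hf : Summable (‖f ·‖)) (p : ℕ) :
    Summable (‖f.coprimeTo p ·‖) :=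
  hf.of_nonneg_of_le (fun _ => norm_nonneg _) fun n => by
    rw [coprimeTo_apply]; split_ifs <;> simp

theorem IsMultiplicative.tsum_mul_prod_eq_tsum_mul_prod {f g : ArithmeticFunction R}
    (hf : f.IsMultiplicative) (hg : g.IsMultiplicative) (hfs : Summable (‖f ·‖))
    (hgs : Summable (‖g ·‖)) {s : Finset ℕ}
    (hs : ∀ p ∈ s, p.Prime) (hfg : ∀ p, p.Prime → p ∉ s → ∑' k, f (p ^ k) = ∑' k, g (p ^ k)) :
    (∑' n, f n) * ∏ p ∈ s, ∑' k, g (p ^ k) = (∑' n, g n) * ∏ p ∈ s, ∑' k, f (p ^ k) := by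
  classical
  set F := {p | p.Prime}.mulIndicator fun p => ∑' k, f (p ^ k)
  set G := {p | p.Prime}.mulIndicator fun p => ∑' k, g (p ^ k)
  have hF := EulerProduct.eulerProduct_hasProd_mulIndicator hf.map_one hf.2 hfs f.map_zero
  have hG := EulerProduct.eulerProduct_hasProd_mulIndicator hg.map_one hg.2 hgs g.map_zero
  have hFs : ∏ p ∈ s, F p = ∏ p ∈ s, ∑' k, f (p ^ k) :=
    prod_congr rfl fun p hp => Set.mulIndicator_of_mem (hs p hp) _
  have hGs : ∏ p ∈ s, G p = ∏ p ∈ s, ∑' k, g (p ^ k) :=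
    prod_congr rfl fun p hp => Set.mulIndicator_of_mem (hs p hp) _
  have hFG : ∀ p ∉ s, F p = G p := fun p hp => by
    by_cases hpp : p.Prime
    · simp only [F, G, Set.mulIndicator_of_mem (show p ∈ {p | p.Prime} from hpp), hfg p hpp hp]
    · simp only [F, G, Set.mulIndicator_of_notMem (show p ∉ {p | p.Prime} from hpp)]
  have hind (H : ℕ → R) : HasProd ((s : Set ℕ).mulIndicator H) (∏ p ∈ s, H p) :=
    hasProd_subtype_iff_mulIndicator.mp (s.hasProd H)
  have hswap : ∀ p, F p * (s : Set ℕ).mulIndicator G p = G p * (s : Set ℕ).mulIndicator F p := by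
    intro p
    by_cases hp : p ∈ s
    · simp only [Set.mulIndicator_of_mem (mem_coe.mpr hp), mul_comm]
    · simp only [Set.mulIndicator_of_notMem (mem_coe.not.mpr hp), hFG p hp]
  rw [← hFs, ← hGs]
  -- both sides are the infinite product of `F · 1_s G = G · 1_s F`
  exact (funext hswap ▸ hF.mul (hind G)).unique (hG.mul (hind F))

theorem IsMultiplicative.tsum_eq_tsum_prime_pow_mul_tsum_coprimeTo {f : ArithmeticFunction R}
    (hf : f.IsMultiplicative) (hfs : Summable (‖f ·‖)) {p : ℕ} (hp : p.Prime) :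
    ∑' n, f n = (∑' k, f (p ^ k)) * ∑' n, f.coprimeTo p n := by
  have hfactor_p : ∑' k, f.coprimeTo p (p ^ k) = 1 := by
    rw [tsum_eq_single 0 fun k hk => ?_]
    · simp [coprimeTo_apply, hf.map_one]
    · rw [coprimeTo_apply, if_neg]
      rw [Nat.coprime_pow_left_iff (Nat.pos_of_ne_zero hk), Nat.coprime_self]
      exact hp.ne_one
  have hfactor_q (q : ℕ) (hq : q.Prime) (hqp : q ∉ ({p} : Finset ℕ)) :
      ∑' k, f (q ^ k) = ∑' k, f.coprimeTo p (q ^ k) := by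
    refine tsum_congr fun k => (if_pos ?_).symm
    exact Nat.Coprime.pow_left _ ((Nat.coprime_primes hq hp).mpr (by simpa using hqp))
  simpa [hfactor_p, mul_comm] using hf.tsum_mul_prod_eq_tsum_mul_prod (hf.coprimeTo p) hfs
    (summable_norm_coprimeTo hfs p) (by simpa using hp) hfactor_q

end Normed

end ArithmeticFunction

noncomputable def rCoeff (p : ℕ) : ℝ := ((p : ℝ) ^ 2 - 1) / ((p : ℝ) ^ 2 - p - 1)

noncomputable def artinFactor (p : ℕ) : ℝ := 1 - 1 / ((p : ℝ) * ((p : ℝ) - 1))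

theorem rFun_eq (t : ℕ) : rFun t = 1 / (t : ℝ) ^ 2 * ∏ p ∈ t.primeFactors, rCoeff p := rfl

theorem artinConst_eq : artinConst = ∏' p : Nat.Primes, artinFactor p := rfl

section Coefficients

variable {p : ℕ}

theorem rCoeff_denom_pos (hp : 2 ≤ p) : 0 < (p : ℝ) ^ 2 - p - 1 := by
  have : (2 : ℝ) ≤ p := by exact_mod_cast hp
  nlinarith

theorem one_le_rCoeff (hp : 2 ≤ p) : 1 ≤ rCoeff p := by
  rw [rCoeff, le_div_iff₀ (rCoeff_denom_pos hp)]
  have : (2 : ℝ) ≤ p := by exact_mod_cast hp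
  linarith

theorem prod_rCoeff_nonneg {S : Finset ℕ} (hS : ∀ p ∈ S, 2 ≤ p) : 0 ≤ ∏ p ∈ S, rCoeff p :=
  prod_nonneg fun p hp => zero_le_one.trans (one_le_rCoeff (hS p hp))

theorem rCoeff_two : rCoeff 2 = 3 := by norm_num [rCoeff]

theorem rCoeff_sq_le (hp : 3 ≤ p) : rCoeff p ^ 2 ≤ p := by
  have hden := rCoeff_denom_pos (by omega : 2 ≤ p)
  have : (3 : ℝ) ≤ p := by exact_mod_cast hp
  rw [rCoeff, div_pow, div_le_iff₀ (by positivity)]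
  nlinarith [mul_nonneg (sub_nonneg.mpr this) (sub_nonneg.mpr this)]

theorem prod_rCoeff_sq_le {n : ℕ} (hn : n ≠ 0) {S : Finset ℕ} (hS : S ⊆ n.primeFactors) :
    (∏ p ∈ S, rCoeff p) ^ 2 ≤ 3 ^ 2 * n := by
  have hprime : ∀ p ∈ S, p.Prime := fun p hp => Nat.prime_of_mem_primeFactors (hS hp)
  have hfactor : ∀ p ∈ S, rCoeff p ^ 2 ≤ (if p = 2 then 9 else 1) * p := by
    intro p hp
    by_cases h2 : p = 2
    · subst h2
      norm_num [rCoeff_two]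
    · simpa [h2] using rCoeff_sq_le (lt_of_le_of_ne (hprime p hp).two_le (Ne.symm h2))
  have hS_le : ∏ p ∈ S, (p : ℝ) ≤ n := by
    have hdvd := (prod_dvd_prod_of_subset _ _ id hS).trans (Nat.prod_primeFactors_dvd n)
    have : ∏ p ∈ S, p ≤ n := Nat.le_of_dvd (Nat.pos_of_ne_zero hn) hdvd
    rw [← Nat.cast_prod]
    exact_mod_cast this
  calc (∏ p ∈ S, rCoeff p) ^ 2 = ∏ p ∈ S, rCoeff p ^ 2 := (prod_pow _ _ _).symm
    _ ≤ ∏ p ∈ S, (if p = 2 then 9 else 1) * (p : ℝ) :=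
        prod_le_prod (fun _ _ => sq_nonneg _) hfactor
    _ = (if 2 ∈ S then 9 else 1) * ∏ p ∈ S, (p : ℝ) := by rw [prod_mul_distrib, prod_ite_eq']
    _ ≤ 3 ^ 2 * n := by
        gcongr
        split_ifs <;> norm_num

theorem artinFactor_eq (hp : 2 ≤ p) :
    artinFactor p = ((p : ℝ) ^ 2 - p - 1) / ((p : ℝ) * ((p : ℝ) - 1)) := by
  have : (2 : ℝ) ≤ p := by exact_mod_cast hp
  have h0 : (p : ℝ) ≠ 0 := by linarith
  have h1 : (p : ℝ) - 1 ≠ 0 := by linarith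
  rw [artinFactor]
  field_simp

theorem artinFactor_pos (hp : 2 ≤ p) : 0 < artinFactor p := by
  have : (2 : ℝ) ≤ p := by exact_mod_cast hp
  rw [artinFactor_eq hp]
  exact div_pos (rCoeff_denom_pos hp) (by nlinarith)

theorem one_sub_rCoeff_add_rCoeff_mul_eq_inv_artinFactor (hp : 2 ≤ p) :
    1 - rCoeff p + rCoeff p * (1 - ((p : ℝ) ^ 2)⁻¹)⁻¹ = (artinFactor p)⁻¹ := by
  have : (2 : ℝ) ≤ p := by exact_mod_cast hp
  have hden := (rCoeff_denom_pos hp).ne'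
  have h2 : (p : ℝ) ^ 2 - 1 ≠ 0 := by nlinarith
  have hx : 1 - ((p : ℝ) ^ 2)⁻¹ = ((p : ℝ) ^ 2 - 1) / (p : ℝ) ^ 2 := by field_simp
  rw [hx, artinFactor_eq hp, rCoeff, inv_div, inv_div, div_mul_div_comm,
    mul_comm ((p : ℝ) ^ 2 - 1), mul_div_mul_right _ _ h2, one_sub_div hden, ← add_div]
  congr 1
  ring

theorem rCoeff_mul_eq_inv_artinFactor (hp : 2 ≤ p) :
    rCoeff p * (1 - (p : ℝ)⁻¹) * (1 - ((p : ℝ) ^ 2)⁻¹)⁻¹ = (artinFactor p)⁻¹ := by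
  have : (2 : ℝ) ≤ p := by exact_mod_cast hp
  have hden := (rCoeff_denom_pos hp).ne'
  have h1 : (p : ℝ) - 1 ≠ 0 := by linarith
  have h2 : (p : ℝ) ^ 2 - 1 ≠ 0 := by nlinarith
  rw [rCoeff, artinFactor]
  field_simp

end Coefficients

noncomputable def rCofactor (d : ℕ) : ArithmeticFunction ℝ :=
  ⟨fun n => 1 / (n : ℝ) ^ 2 * ∏ p ∈ n.primeFactors \ d.primeFactors, rCoeff p, by simp⟩

section Cofactor

variable (d : ℕ)

theorem rCofactor_apply (n : ℕ) :
    rCofactor d n = 1 / (n : ℝ) ^ 2 * ∏ p ∈ n.primeFactors \ d.primeFactors, rCoeff p := rfl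

theorem rCofactor_one_left (n : ℕ) : rCofactor 1 n = rFun n := by
  simp [rCofactor_apply, rFun, rCoeff]

theorem rFun_mul (n : ℕ) : rFun (d * n) = rFun d * rCofactor d n := by
  rcases eq_or_ne d 0 with rfl | hd
  · simp [rFun]
  rcases eq_or_ne n 0 with rfl | hn
  · simp [rFun]
  rw [rCofactor_apply, rFun, rFun, Nat.primeFactors_mul hd hn, ← union_sdiff_self_eq_union,
    prod_union disjoint_sdiff]
  push_cast
  simp only [rCoeff]
  ring

theorem isMultiplicative_rCofactor : (rCofactor d).IsMultiplicative := by
  refine ⟨by simp [rCofactor_apply], fun {m n} hmn => ?_⟩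
  simp only [rCofactor_apply, hmn.primeFactors_mul, union_sdiff_distrib]
  rw [prod_union (hmn.disjoint_primeFactors.mono sdiff_subset sdiff_subset)]
  push_cast
  ring

theorem rCofactor_nonneg (n : ℕ) : 0 ≤ rCofactor d n :=
  mul_nonneg (by positivity) <| prod_rCoeff_nonneg fun p hp =>
    (Nat.prime_of_mem_primeFactors (mem_sdiff.mp hp).1).two_le

theorem rCofactor_prime_pow {p k : ℕ} (hp : p.Prime) (hk : k ≠ 0) :
    rCofactor d (p ^ k) =
      (if p ∈ d.primeFactors then 1 else rCoeff p) * (((p : ℝ) ^ 2)⁻¹) ^ k := by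
  rw [rCofactor_apply, Nat.primeFactors_pow _ hk, hp.primeFactors]
  split_ifs with h
  · rw [sdiff_eq_empty_iff_subset.mpr (singleton_subset_iff.mpr h)]
    simp [← pow_mul, mul_comm]
  · rw [(disjoint_singleton_left.mpr h).sdiff_eq_left]
    simp [← pow_mul, mul_comm]

theorem rCofactor_le_rpow (n : ℕ) : rCofactor d n ≤ 3 * (n : ℝ) ^ (-(3 / 2) : ℝ) := by
  rcases eq_or_ne n 0 with rfl | hn
  · simp [Real.zero_rpow]
  set P := ∏ p ∈ n.primeFactors \ d.primeFactors, rCoeff p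
  have hP : P ≤ 3 * √n := by
    have hP0 : 0 ≤ P := prod_rCoeff_nonneg fun p hp =>
      (Nat.prime_of_mem_primeFactors (mem_sdiff.mp hp).1).two_le
    rw [← Real.sqrt_sq hP0, show (3 : ℝ) = √(3 ^ 2) by simp, ← Real.sqrt_mul (by norm_num)]
    exact Real.sqrt_le_sqrt (prod_rCoeff_sq_le hn sdiff_subset)
  have hn0 : (0 : ℝ) < n := by exact_mod_cast Nat.pos_of_ne_zero hn
  calc rCofactor d n = 1 / (n : ℝ) ^ 2 * P := rfl
    _ ≤ 1 / (n : ℝ) ^ 2 * (3 * √n) := by gcongr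
    _ = 3 * (n : ℝ) ^ (-(3 / 2) : ℝ) := by
        rw [Real.sqrt_eq_rpow, ← Real.rpow_natCast, one_div, ← Real.rpow_neg hn0.le,
          mul_left_comm, ← Real.rpow_add hn0]
        norm_num

theorem summable_rCofactor : Summable (‖rCofactor d ·‖) := by
  simp only [Real.norm_of_nonneg (rCofactor_nonneg d _)]
  exact .of_nonneg_of_le (rCofactor_nonneg d) (rCofactor_le_rpow d)
    ((Real.summable_nat_rpow.mpr (by norm_num)).mul_left 3)

theorem tsum_rCofactor_prime_pow {p : ℕ} (hp : p.Prime) :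
    ∑' k, rCofactor d (p ^ k) =
      if p ∈ d.primeFactors then (1 - ((p : ℝ) ^ 2)⁻¹)⁻¹ else (artinFactor p)⁻¹ := by
  set x := ((p : ℝ) ^ 2)⁻¹
  set w := if p ∈ d.primeFactors then 1 else rCoeff p
  have hp2 : (2 : ℝ) ≤ p := by exact_mod_cast hp.two_le
  have hx0 : 0 ≤ x := by positivity
  have hx1 : x < 1 := inv_lt_one_of_one_lt₀ (by nlinarith)
  have hterm : ∀ k, rCofactor d (p ^ k) = (if k = 0 then 1 - w else 0) + w * x ^ k := by
    rintro (_ | k)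
    · simp [(isMultiplicative_rCofactor d).map_one]
    · simp [rCofactor_prime_pow d hp k.succ_ne_zero, w, x]
  have hsum : HasSum (fun k => rCofactor d (p ^ k)) (1 - w + w * (1 - x)⁻¹) := by
    simp only [hterm]
    exact (hasSum_ite_eq 0 (1 - w)).add ((hasSum_geometric_of_lt_one hx0 hx1).mul_left w)
  rw [hsum.tsum_eq]
  split_ifs with h
  · simp [w, h]
  · simpa only [w, h, if_false, x] using
      one_sub_rCoeff_add_rCoeff_mul_eq_inv_artinFactor hp.two_le

end Cofactor

theorem tsum_rFun_eq_tsum_rCofactor : ∑' n, rFun n = ∑' n, rCofactor 1 n := by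
  simp only [rCofactor_one_left]

theorem tsum_rFun_pos : 0 < ∑' n, rFun n := by
  rw [tsum_rFun_eq_tsum_rCofactor]
  calc (0 : ℝ) < rCofactor 1 1 := by simp [(isMultiplicative_rCofactor 1).map_one]
    _ ≤ ∑' n, rCofactor 1 n :=
      (summable_rCofactor 1).of_norm.le_tsum 1 fun n _ => rCofactor_nonneg 1 n

theorem artinConst_mul_tsum_rFun : artinConst * ∑' n, rFun n = 1 := by
  have hfactor (p : Nat.Primes) : ∑' k, rCofactor 1 ((p : ℕ) ^ k) = (artinFactor p)⁻¹ := by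
    simp [tsum_rCofactor_prime_pow 1 p.2]
  have hprod := (isMultiplicative_rCofactor 1).eulerProduct_hasProd (summable_rCofactor 1)
  simp only [hfactor, ← tsum_rFun_eq_tsum_rCofactor] at hprod
  have hartin : artinConst = (∑' n, rFun n)⁻¹ := by
    simpa [← artinConst_eq] using (hprod.inv₀ tsum_rFun_pos.ne').tprod_eq
  rw [hartin, inv_mul_cancel₀ tsum_rFun_pos.ne']

theorem rFun_mul_mul_totient {d : ℕ} (hd : d ≠ 0) :
    rFun d * (d * d.totient) = ∏ p ∈ d.primeFactors, rCoeff p * (1 - (p : ℝ)⁻¹) := by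
  have htot : (d.totient : ℝ) = d * ∏ p ∈ d.primeFactors, (1 - (p : ℝ)⁻¹) := by
    have := congrArg (Rat.cast : ℚ → ℝ) (Nat.totient_eq_mul_prod_factors d)
    push_cast at this
    exact this
  have hd0 : (d : ℝ) ≠ 0 := by exact_mod_cast hd
  rw [rFun_eq, htot, prod_mul_distrib]
  field_simp

theorem tsum_rFun_mul_mul_totient {d : ℕ} (hd : d ≠ 0) :
    (∑' n, rFun (d * n)) * (d * d.totient) = ∑' n, rFun n := by
  set P₁ := ∏ p ∈ d.primeFactors, ∑' k, rCofactor 1 (p ^ k)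
  set P_d := ∏ p ∈ d.primeFactors, ∑' k, rCofactor d (p ^ k)
  have hcompare : (∑' n, rCofactor d n) * P₁ = (∑' n, rCofactor 1 n) * P_d :=
    (isMultiplicative_rCofactor d).tsum_mul_prod_eq_tsum_mul_prod (isMultiplicative_rCofactor 1)
      (summable_rCofactor d) (summable_rCofactor 1) (fun p => Nat.prime_of_mem_primeFactors)
      fun p hp hpd => by simp [tsum_rCofactor_prime_pow _ hp, hpd]
  have hlocal : rFun d * (d * d.totient) * P_d = P₁ := by
    rw [rFun_mul_mul_totient hd, ← prod_mul_distrib]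
    refine prod_congr rfl fun p hp => ?_
    have hp' := Nat.prime_of_mem_primeFactors hp
    simpa [tsum_rCofactor_prime_pow _ hp', hp] using rCoeff_mul_eq_inv_artinFactor hp'.two_le
  have hP₁ : P₁ ≠ 0 := prod_ne_zero_iff.mpr fun p hp => by
    have hp' := Nat.prime_of_mem_primeFactors hp
    simpa [tsum_rCofactor_prime_pow 1 hp'] using (artinFactor_pos hp'.two_le).ne'
  simp only [rFun_mul, tsum_mul_left, tsum_rFun_eq_tsum_rCofactor]
  apply mul_right_cancel₀ hP₁
  linear_combination (rFun d * (d * d.totient)) * hcompare + (∑' n, rCofactor 1 n) * hlocal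

theorem tsum_rFun_two_mul_mul {d : ℕ} (hd : d ≠ 0) :
    ∑' n, rFun (2 * d * n) =
      rCofactor d 2 * (1 - ((2 : ℝ) ^ 2)⁻¹)⁻¹ * ∑' n, if n.Coprime 2 then rFun (d * n) else 0 := by
  have hsplit := (isMultiplicative_rCofactor (2 * d)).tsum_eq_tsum_prime_pow_mul_tsum_coprimeTo
    (summable_rCofactor (2 * d)) Nat.prime_two
  have hfactor : ∑' k, rCofactor (2 * d) (2 ^ k) = (1 - ((2 : ℝ) ^ 2)⁻¹)⁻¹ := by
    rw [tsum_rCofactor_prime_pow _ Nat.prime_two,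
      if_pos (Nat.mem_primeFactors.mpr ⟨Nat.prime_two, dvd_mul_right 2 d, by omega⟩)]
    norm_num
  have hodd (n : ℕ) : (rCofactor (2 * d)).coprimeTo 2 n = (rCofactor d).coprimeTo 2 n := by
    simp only [ArithmeticFunction.coprimeTo_apply]
    split_ifs with h
    · have h2n : 2 ∉ n.primeFactors := fun h2 =>
        Nat.prime_two.coprime_iff_not_dvd.mp h.symm (Nat.dvd_of_mem_primeFactors h2)
      rw [rCofactor_apply, rCofactor_apply, Nat.primeFactors_mul two_ne_zero hd,
        Nat.Prime.primeFactors Nat.prime_two, ← insert_eq, sdiff_insert_of_notMem h2n]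
    · rfl
  calc ∑' n, rFun (2 * d * n) = rFun (2 * d) * ∑' n, rCofactor (2 * d) n := by
        rw [← tsum_mul_left]
        exact tsum_congr fun n => rFun_mul _ n
    _ = rFun d * rCofactor d 2 * ((1 - ((2 : ℝ) ^ 2)⁻¹)⁻¹ * ∑' n, (rCofactor d).coprimeTo 2 n) := by
        rw [show rFun (2 * d) = rFun d * rCofactor d 2 by rw [mul_comm, rFun_mul], hsplit,
          hfactor]
        simp only [hodd]
    _ = rCofactor d 2 * (1 - ((2 : ℝ) ^ 2)⁻¹)⁻¹ * ∑' n, rFun d * (rCofactor d).coprimeTo 2 n := by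
        rw [tsum_mul_left]
        ring
    _ = _ := by
        congr 1
        refine tsum_congr fun n => ?_
        rw [ArithmeticFunction.coprimeTo_apply, rFun_mul]
        split_ifs <;> simp

theorem rhoDensity_mul_mul {d : ℕ} (hd : d ≠ 0) (b : ℤ) (k : ℕ) :
    rhoDensity (d * b) (d * k) =
      artinConst * ∑' n : ℕ, if 1 ≤ n ∧ (n : ℤ) ≡ b [ZMOD k] then rFun (d * n) else 0 := by
  have hdZ : (d : ℤ) ≠ 0 := by exact_mod_cast hd
  rw [rhoDensity, ← (mul_right_injective₀ hd).tsum_eq]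
  · congr 1
    refine tsum_congr fun n => ?_
    have hcond : (1 ≤ d * n ∧ ((d * n : ℕ) : ℤ) ≡ d * b [ZMOD ((d * k : ℕ) : ℤ)]) ↔
        (1 ≤ n ∧ (n : ℤ) ≡ b [ZMOD k]) := by
      push_cast
      rw [Int.ModEq.mul_left_cancel_iff' hdZ, Nat.one_le_iff_ne_zero, Nat.one_le_iff_ne_zero,
        mul_ne_zero_iff, and_iff_right hd]
    simp only [hcond]
  · intro t ht
    rw [Function.mem_support, ne_eq, ite_eq_right_iff, not_forall] at ht
    obtain ⟨⟨-, hmod⟩, -⟩ := ht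
    have hdvd : (d : ℤ) ∣ t := by
      have hdk : (d : ℤ) ∣ ((d * k : ℕ) : ℤ) := Int.natCast_dvd_natCast.mpr (dvd_mul_right d k)
      exact (dvd_sub_right (dvd_mul_right _ b)).mp (hdk.trans hmod.dvd)
    obtain ⟨n, rfl⟩ := Int.natCast_dvd_natCast.mp hdvd
    exact ⟨n, rfl⟩

theorem rhoDensity_zero_left {d : ℕ} (hd : d ≠ 0) :
    rhoDensity 0 d = artinConst * ∑' n, rFun (d * n) := by
  have h := rhoDensity_mul_mul hd 0 1
  simp only [mul_zero, mul_one, Nat.cast_one, Int.modEq_one, and_true] at h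
  rw [h]
  congr 1
  refine tsum_congr fun n => ?_
  rcases eq_or_ne n 0 with rfl | hn
  · simp [rFun]
  · exact if_pos (Nat.one_le_iff_ne_zero.mpr hn)

theorem rhoDensity_self_two_mul {d : ℕ} (hd : d ≠ 0) :
    rhoDensity d (2 * d) = artinConst * ∑' n, if n.Coprime 2 then rFun (d * n) else 0 := by
  have h := rhoDensity_mul_mul hd 1 2
  rw [mul_one, mul_comm d 2] at h
  rw [h]
  congr 1
  refine tsum_congr fun n => if_congr ?_ rfl rfl
  rw [Nat.coprime_two_right, Nat.odd_iff, Int.ModEq]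
  omega

theorem rhoDensity_zero_two_mul {d : ℕ} (hd : d ≠ 0) :
    rhoDensity 0 (2 * d) = rCofactor d 2 * (1 - ((2 : ℝ) ^ 2)⁻¹)⁻¹ * rhoDensity d (2 * d) := by
  rw [rhoDensity_zero_left (by omega), tsum_rFun_two_mul_mul hd, rhoDensity_self_two_mul hd]
  ring

/-- `ρ(0,d) = 1/(d·φ(d))`, and `ρ(d,2d) = ρ(0,2d)` if `d` is odd while
`ρ(d,2d) = 3·ρ(0,2d)` if `d` is even. -/
theorem rhoDensity_zero_eq (d : ℕ) (hd : 1 ≤ d) :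
    rhoDensity 0 d = 1 / ((d : ℝ) * (Nat.totient d : ℝ)) ∧
    (Odd d → rhoDensity (d : ℤ) (2 * d) = rhoDensity 0 (2 * d)) ∧
    (Even d → rhoDensity (d : ℤ) (2 * d) = 3 * rhoDensity 0 (2 * d)) := by
  have hd0 : d ≠ 0 := by omega
  have hcofactor := rCofactor_prime_pow d Nat.prime_two one_ne_zero
  simp only [pow_one] at hcofactor
  refine ⟨?_, fun hodd => ?_, fun heven => ?_⟩
  · have hpos : (0 : ℝ) < d * d.totient := by
      have := Nat.totient_pos.mpr (Nat.pos_of_ne_zero hd0)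
      positivity
    rw [rhoDensity_zero_left hd0, eq_div_iff hpos.ne', mul_assoc, tsum_rFun_mul_mul_totient hd0,
      artinConst_mul_tsum_rFun]
  · have h2 : 2 ∉ d.primeFactors := fun h =>
      (Nat.not_even_iff_odd.mpr hodd) (even_iff_two_dvd.mpr (Nat.dvd_of_mem_primeFactors h))
    rw [rhoDensity_zero_two_mul hd0, hcofactor, if_neg h2, rCoeff_two]
    norm_num
  · have h2 : 2 ∈ d.primeFactors :=
      Nat.mem_primeFactors.mpr ⟨Nat.prime_two, even_iff_two_dvd.mp heven, hd0⟩
    rw [rhoDensity_zero_two_mul hd0, hcofactor, if_pos h2]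
    norm_num
    ring
end

section
/- Let a ≥ 1 and d ≥ 1 be integers and set w = gcd(a,d), α = a/w, δ = d/w. If γ(w)·w divides d, where γ(w) = Π_{p | w} p is the squarefree kernel of w, then ρ(a,d) = (ρ(α,δ)/(w·φ(w))) · Π_{p | gcd(δ,w)} (1 − 1/p²)/(1 − 1/(p(p−1))), the product being over primes p dividing gcd(δ,w). -/
/-- The squarefree kernel `γ(n) = Π_{p | n} p`. -/
def kernel (n : ℕ) : ℕ := ∏ p ∈ n.primeFactors, p

/-!
Since `w` divides both `a` and `d`, every `t ≡ a (mod d)` is a multiple `w s` with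
`s ≡ α (mod δ)`. Every prime of `w` divides `δ` (because `γ(w) w ∣ d`) and `α` is prime
to `δ`, so such `s` is prime to `w`, and `r(w s) = r(w) r(s)`. Hence `ρ(a, d) = r(w) ρ(α, δ)`,
and Euler's product for `φ(w)` turns `r(w) w φ(w)` into the product over the primes of `w`,
which are exactly the primes of `gcd(δ, w)`.
-/

open Finset

lemma rFun_mul_of_coprime {m n : ℕ} (h : m.Coprime n) : rFun (m * n) = rFun m * rFun n := by
  simp only [rFun, h.primeFactors_mul, prod_union h.disjoint_primeFactors]
  push_cast
  ring

lemma rFun_factor_mul_one_sub_inv {p : ℝ} (hp : 2 ≤ p) :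
    (p ^ 2 - 1) / (p ^ 2 - p - 1) * (1 - p⁻¹) = (1 - 1 / p ^ 2) / (1 - 1 / (p * (p - 1))) := by
  have : p ^ 2 - p - 1 ≠ 0 := by nlinarith
  have : p - 1 ≠ 0 := by linarith
  have : p ≠ 0 := by linarith
  field_simp

lemma rFun_mul_mul_totient_s12 {n : ℕ} (hn : n ≠ 0) :
    rFun n * (n * Nat.totient n) =
      ∏ p ∈ n.primeFactors, (1 - 1 / (p : ℝ) ^ 2) / (1 - 1 / ((p : ℝ) * ((p : ℝ) - 1))) := by
  have hφ : (Nat.totient n : ℝ) = n * ∏ p ∈ n.primeFactors, (1 - (p : ℝ)⁻¹) := by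
    simpa using congrArg (Rat.cast : ℚ → ℝ) (Nat.totient_eq_mul_prod_factors n)
  have hn' : (n : ℝ) ≠ 0 := by exact_mod_cast hn
  calc rFun n * (n * Nat.totient n)
      = (∏ p ∈ n.primeFactors, ((p : ℝ) ^ 2 - 1) / ((p : ℝ) ^ 2 - p - 1)) *
          ∏ p ∈ n.primeFactors, (1 - (p : ℝ)⁻¹) := by
        rw [rFun, hφ]; field_simp
    _ = _ := by
        rw [← prod_mul_distrib]
        exact prod_congr rfl fun p hp ↦ rFun_factor_mul_one_sub_inv
          (by exact_mod_cast (Nat.prime_of_mem_primeFactors hp).two_le)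

lemma one_le_and_modEq_mul_iff {w : ℕ} (hw : w ≠ 0) (s α δ : ℕ) :
    (1 ≤ w * s ∧ ((w * s : ℕ) : ℤ) ≡ ((w * α : ℕ) : ℤ) [ZMOD ((w * δ : ℕ) : ℤ)]) ↔
      (1 ≤ s ∧ (s : ℤ) ≡ α [ZMOD δ]) := by
  simp only [Int.natCast_modEq_iff, Nat.ModEq.mul_left_cancel_iff' hw, Nat.one_le_iff_ne_zero,
    mul_ne_zero_iff, hw, ne_eq, not_false_eq_true, true_and]

lemma tsum_ite_modEq_mul {M : Type*} [AddCommMonoid M] [TopologicalSpace M] (f : ℕ → M)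
    {w : ℕ} (hw : w ≠ 0) (α δ : ℕ) :
    ∑' t : ℕ, (if 1 ≤ t ∧ (t : ℤ) ≡ ((w * α : ℕ) : ℤ) [ZMOD ((w * δ : ℕ) : ℤ)] then f t
      else 0) = ∑' s : ℕ, if 1 ≤ s ∧ (s : ℤ) ≡ α [ZMOD δ] then f (w * s) else 0 := by
  rw [← (mul_right_injective₀ hw).tsum_eq]
  · simp only [one_le_and_modEq_mul_iff hw]
  refine Function.support_subset_iff'.mpr fun t ht ↦ if_neg fun ⟨_, hmod⟩ ↦ ht ?_
  have hwt : w ∣ t :=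
    ((Int.natCast_modEq_iff.mp hmod).of_mul_right δ |>.dvd_iff dvd_rfl).mpr (dvd_mul_right w α)
  exact ⟨t / w, Nat.mul_div_cancel' hwt⟩

lemma coprime_of_modEq_of_kernel_dvd {w s α δ : ℕ} (hw : w ≠ 0) (hα : α.Coprime δ)
    (hk : kernel w ∣ δ) (hs : s ≡ α [MOD δ]) : w.Coprime s := by
  refine Nat.coprime_of_dvd fun p hp hpw hps ↦ ?_
  have hpδ : p ∣ δ := (dvd_prod_of_mem _ (Nat.mem_primeFactors.mpr ⟨hp, hpw, hw⟩)).trans hk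
  have hpg : p ∣ Nat.gcd s δ := Nat.dvd_gcd hps hpδ
  rw [hs.gcd_eq, hα.gcd_eq_one] at hpg
  exact hp.not_dvd_one hpg

lemma rhoDensity_mul {w α δ : ℕ} (hw : w ≠ 0) (hα : α.Coprime δ) (hk : kernel w ∣ δ) :
    rhoDensity ((w * α : ℕ) : ℤ) (w * δ) = rFun w * rhoDensity α δ := by
  rw [rhoDensity, rhoDensity, tsum_ite_modEq_mul rFun hw, mul_left_comm,
    ← tsum_mul_left (a := rFun w)]
  congr 1
  refine tsum_congr fun s ↦ ?_
  split_ifs with hs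
  · exact rFun_mul_of_coprime
      (coprime_of_modEq_of_kernel_dvd hw hα hk (Int.natCast_modEq_iff.mp hs.2))
  · rw [mul_zero]

lemma primeFactors_gcd_of_kernel_dvd {m n : ℕ} (hn : n ≠ 0) (h : kernel n ∣ m) :
    (m.gcd n).primeFactors = n.primeFactors := by
  refine (Nat.primeFactors_mono (Nat.gcd_dvd_right m n) hn).antisymm fun p hp ↦ ?_
  exact Nat.mem_primeFactors.mpr ⟨Nat.prime_of_mem_primeFactors hp,
    Nat.dvd_gcd ((dvd_prod_of_mem _ hp).trans h) (Nat.dvd_of_mem_primeFactors hp),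
    (Nat.gcd_pos_of_pos_right m (Nat.pos_of_ne_zero hn)).ne'⟩

theorem rhoDensity_of_kernel_dvd_general (a d : ℕ) (ha : 1 ≤ a)
    (w α δ' : ℕ) (hw : w = Nat.gcd a d) (hα : α = a / w) (hδ : δ' = d / w)
    (hdvd : kernel w * w ∣ d) :
    rhoDensity (a : ℤ) d =
      (rhoDensity (α : ℤ) δ' / ((w : ℝ) * (Nat.totient w : ℝ))) *
        ∏ p ∈ (Nat.gcd δ' w).primeFactors,
          ((1 - 1 / (p : ℝ) ^ 2) / (1 - 1 / ((p : ℝ) * ((p : ℝ) - 1)))) := by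
  have hw0 : w ≠ 0 := hw ▸ (Nat.gcd_pos_of_pos_left d ha).ne'
  have ha' : a = w * α := by rw [hα, Nat.mul_div_cancel' (hw ▸ Nat.gcd_dvd_left a d)]
  have hd' : d = w * δ' := by rw [hδ, Nat.mul_div_cancel' (hw ▸ Nat.gcd_dvd_right a d)]
  have hcop : α.Coprime δ' := by
    rw [hα, hδ, hw]
    exact Nat.coprime_div_gcd_div_gcd (hw ▸ Nat.pos_of_ne_zero hw0)
  have hk : kernel w ∣ δ' := (mul_dvd_mul_iff_right hw0).mp (by rwa [hd', mul_comm w] at hdvd)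
  have hwR : (w : ℝ) ≠ 0 := by exact_mod_cast hw0
  have hφR : (Nat.totient w : ℝ) ≠ 0 := by exact_mod_cast (Nat.totient_pos.mpr hw0.bot_lt).ne'
  rw [ha', hd', rhoDensity_mul hw0 hcop hk, primeFactors_gcd_of_kernel_dvd hw0 hk,
    ← rFun_mul_mul_totient_s12 hw0]
  field_simp

/-- With `w = gcd(a,d)`, `α = a/w`, `δ = d/w`: if `γ(w)·w | d` then
`ρ(a,d) = (ρ(α,δ)/(w·φ(w))) · Π_{p | gcd(δ,w)} (1 − 1/p²)/(1 − 1/(p(p−1)))`. -/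
theorem rhoDensity_of_kernel_dvd (a d : ℕ) (ha : 1 ≤ a) (hd : 1 ≤ d)
    (w α δ' : ℕ) (hw : w = Nat.gcd a d) (hα : α = a / w) (hδ : δ' = d / w)
    (hdvd : kernel w * w ∣ d) :
    rhoDensity (a : ℤ) d =
      (rhoDensity (α : ℤ) δ' / ((w : ℝ) * (Nat.totient w : ℝ))) *
        ∏ p ∈ (Nat.gcd δ' w).primeFactors,
          ((1 - 1 / (p : ℝ) ^ 2) / (1 - 1 / ((p : ℝ) * ((p : ℝ) - 1)))) :=
  rhoDensity_of_kernel_dvd_general a d ha w α δ' hw hα hδ hdvd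
end

section
/- For every Dirichlet character χ modulo d one has |A_χ| ≤ 1, with equality if and only if χ is the principal character modulo d. -/
/-!
Away from `d` the Euler factor at `p` is `(p³ - p² - p + z) / ((p² - z)(p - 1))` with `z = χ(p)` on
the unit circle, and for real `q`
`|(q² - z)(q - 1)|² - |q³ - q² - q + z|² = (q⁴ - q³ - q) |z - 1|²`.
So every factor has modulus at most `1`, with equality only when `χ(p) = 1`. The factors are
`1 + O(p⁻²)`, hence the product converges and its modulus is bounded by that of each single factor.
If `χ ≠ 1`, Dirichlet's theorem on primes in progressions gives a prime `p ∤ d` with `χ(p) ≠ 1`.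
-/

/-- The absolutely convergent Euler product
`A_χ = Π_{p prime, p ∤ d} (1 + (χ(p)−1)·p/((p²−χ(p))(p−1)))`. -/
noncomputable def Achi {d : ℕ} (χ : DirichletCharacter ℂ d) : ℂ :=
  ∏' p : Nat.Primes,
    if (p : ℕ) ∣ d then 1
    else 1 + (χ ((p : ℕ) : ZMod d) - 1) * ((p : ℕ) : ℂ) /
        ((((p : ℕ) : ℂ) ^ 2 - χ ((p : ℕ) : ZMod d)) * (((p : ℕ) : ℂ) - 1))

open Complex

noncomputable def eulerFactor (q : ℝ) (z : ℂ) : ℂ :=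
  1 + (z - 1) * q / ((q ^ 2 - z) * (q - 1))

section EulerFactor

variable {q : ℝ} {z : ℂ}

@[simp]
lemma eulerFactor_one (q : ℝ) : eulerFactor q 1 = 1 := by
  simp [eulerFactor]

lemma normSq_eulerFactor_den_sub_normSq_num (q : ℝ) (hz : ‖z‖ = 1) :
    normSq (((q : ℂ) ^ 2 - z) * (q - 1)) - normSq ((q : ℂ) ^ 3 - q ^ 2 - q + z) =
      (q ^ 4 - q ^ 3 - q) * normSq (z - 1) := by
  have hz' : z.re ^ 2 + z.im ^ 2 = 1 := by
    rw [← one_pow 2, ← hz, ← normSq_eq_norm_sq, normSq_apply]; ring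
  simp only [normSq_apply, map_mul, pow_succ, pow_zero, one_mul, sub_re, mul_re, ofReal_re,
    ofReal_im, mul_zero, sub_zero, sub_im, mul_im, zero_mul, add_zero, zero_sub, mul_neg, neg_mul,
    neg_neg, one_re, one_im, sub_self, add_re, add_im, zero_add]
  linear_combination ((q - 1) ^ 2 - 1 - (q ^ 4 - q ^ 3 - q)) * hz'

lemma sq_sub_one_le_norm_sq_sub (q : ℝ) (hz : ‖z‖ = 1) : q ^ 2 - 1 ≤ ‖(q : ℂ) ^ 2 - z‖ := by
  have h : ‖(q : ℂ) ^ 2‖ = q ^ 2 := by simp [sq_abs]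
  linarith [norm_sub_norm_le ((q : ℂ) ^ 2) z]

lemma eulerFactor_den_ne_zero (hq : 2 ≤ q) (hz : ‖z‖ = 1) : ((q : ℂ) ^ 2 - z) * (q - 1) ≠ 0 := by
  refine mul_ne_zero ?_ ?_
  · refine norm_pos_iff.mp (lt_of_lt_of_le ?_ (sq_sub_one_le_norm_sq_sub q hz))
    nlinarith
  · rw [sub_ne_zero, ← ofReal_one, Ne, ofReal_inj]
    linarith

lemma pow_four_sub_pow_three_sub_self_pos (hq : 2 ≤ q) : 0 < q ^ 4 - q ^ 3 - q := by
  have hq2 : 4 ≤ q ^ 2 := by nlinarith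
  rw [show q ^ 4 - q ^ 3 - q = q * (q ^ 2 * (q - 1) - 1) by ring]
  exact mul_pos (by linarith) (by nlinarith)

lemma one_sub_normSq_eulerFactor (hq : 2 ≤ q) (hz : ‖z‖ = 1) :
    1 - normSq (eulerFactor q z) =
      (q ^ 4 - q ^ 3 - q) * normSq (z - 1) / normSq (((q : ℂ) ^ 2 - z) * (q - 1)) := by
  have hD := eulerFactor_den_ne_zero hq hz
  have hD' : normSq (((q : ℂ) ^ 2 - z) * (q - 1)) ≠ 0 := normSq_eq_zero.not.mpr hD
  have hdiv : eulerFactor q z = ((q : ℂ) ^ 3 - q ^ 2 - q + z) / (((q : ℂ) ^ 2 - z) * (q - 1)) := by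
    rw [eulerFactor, one_add_div hD]
    ring
  rw [hdiv, map_div₀, eq_div_iff hD', sub_mul, one_mul, div_mul_cancel₀ _ hD']
  exact normSq_eulerFactor_den_sub_normSq_num q hz

lemma norm_eulerFactor_le_one (hq : 2 ≤ q) (hz : ‖z‖ = 1) : ‖eulerFactor q z‖ ≤ 1 := by
  have hdefect : 0 ≤ (q ^ 4 - q ^ 3 - q) * normSq (z - 1) / normSq (((q : ℂ) ^ 2 - z) * (q - 1)) :=
    div_nonneg (mul_nonneg (pow_four_sub_pow_three_sub_self_pos hq).le (normSq_nonneg _))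
      (normSq_nonneg _)
  rw [← sq_le_one_iff₀ (norm_nonneg _), ← normSq_eq_norm_sq]
  linarith [one_sub_normSq_eulerFactor hq hz]

lemma norm_eulerFactor_lt_one (hq : 2 ≤ q) (hz : ‖z‖ = 1) (h1 : z ≠ 1) :
    ‖eulerFactor q z‖ < 1 := by
  have hdefect : 0 < (q ^ 4 - q ^ 3 - q) * normSq (z - 1) / normSq (((q : ℂ) ^ 2 - z) * (q - 1)) :=
    div_pos
      (mul_pos (pow_four_sub_pow_three_sub_self_pos hq) (normSq_pos.mpr (sub_ne_zero.mpr h1)))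
      (normSq_pos.mpr (eulerFactor_den_ne_zero hq hz))
  rw [← sq_lt_one_iff₀ (norm_nonneg _), ← normSq_eq_norm_sq]
  linarith [one_sub_normSq_eulerFactor hq hz]

lemma norm_eulerFactor_sub_one_le (hq : 2 ≤ q) (hz : ‖z‖ = 1) :
    ‖eulerFactor q z - 1‖ ≤ 6 / q ^ 2 := by
  have hnum : ‖(z - 1) * q‖ ≤ 2 * q := by
    rw [norm_mul, norm_real, Real.norm_of_nonneg (by linarith)]
    gcongr
    linarith [norm_sub_le z 1, norm_one (α := ℂ)]
  have hden : (q ^ 2 - 1) * (q - 1) ≤ ‖((q : ℂ) ^ 2 - z) * (q - 1)‖ := by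
    rw [norm_mul, ← ofReal_one, ← ofReal_sub, norm_real, Real.norm_of_nonneg (by linarith)]
    gcongr
    · linarith
    · exact sq_sub_one_le_norm_sq_sub q hz
  calc ‖eulerFactor q z - 1‖ = ‖(z - 1) * q‖ / ‖((q : ℂ) ^ 2 - z) * (q - 1)‖ := by
        rw [eulerFactor, add_sub_cancel_left, norm_div]
    _ ≤ 2 * q / ((q ^ 2 - 1) * (q - 1)) := div_le_div₀ (by positivity) hnum (by nlinarith) hden
    _ ≤ 6 / q ^ 2 := by
        rw [div_le_div_iff₀ (by nlinarith) (by positivity)]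
        nlinarith

end EulerFactor

lemma norm_tprod_le_norm_of_norm_le_one {ι R : Type*} [SeminormedCommRing R] [NormMulClass R]
    [NormOneClass R] {f : ι → R} (hf : Multipliable f) (h : ∀ i, ‖f i‖ ≤ 1) (i : ι) :
    ‖∏' j, f j‖ ≤ ‖f i‖ := by
  classical
  refine le_of_tendsto hf.hasProd.norm (Filter.eventually_atTop.mpr ⟨{i}, fun s hs => ?_⟩)
  rw [← Finset.mul_prod_erase s _ (Finset.singleton_subset_iff.mp hs)]
  exact mul_le_of_le_one_right (norm_nonneg _)
    (Finset.prod_le_one (fun j _ => norm_nonneg _) fun j _ => h j)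

namespace DirichletCharacter

variable {d : ℕ} (χ : DirichletCharacter ℂ d)

lemma norm_apply_prime_of_not_dvd {p : ℕ} (hp : p.Prime) (hpd : ¬ p ∣ d) : ‖χ p‖ = 1 := by
  obtain ⟨u, hu⟩ := (ZMod.isUnit_prime_iff_not_dvd hp).mpr hpd
  rw [← hu]
  exact χ.unit_norm_eq_one u

lemma exists_prime_apply_ne_one [NeZero d] (hχ : χ ≠ 1) :
    ∃ p : ℕ, p.Prime ∧ ¬ p ∣ d ∧ χ p ≠ 1 := by
  obtain ⟨u, hu⟩ := MulChar.ne_one_iff.mp hχ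
  obtain ⟨p, -, hp, hpu⟩ := Nat.forall_exists_prime_gt_and_eq_mod u.isUnit 0
  refine ⟨p, hp, (ZMod.isUnit_prime_iff_not_dvd hp).mp (hpu ▸ u.isUnit), hpu ▸ hu⟩

noncomputable def achiFactor (p : Nat.Primes) : ℂ :=
  if (p : ℕ) ∣ d then 1 else eulerFactor p (χ p)

lemma Achi_eq_tprod : Achi χ = ∏' p, χ.achiFactor p := by
  simp [Achi, achiFactor, eulerFactor]

@[simp]
lemma achiFactor_one (p : Nat.Primes) : (1 : DirichletCharacter ℂ d).achiFactor p = 1 := by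
  unfold achiFactor
  split_ifs with hpd
  · rfl
  · rw [MulChar.one_apply ((ZMod.isUnit_prime_iff_not_dvd p.prop).mpr hpd), eulerFactor_one]

lemma norm_achiFactor_le_one (p : Nat.Primes) : ‖χ.achiFactor p‖ ≤ 1 := by
  unfold achiFactor
  split_ifs with hpd
  · exact norm_one.le
  · exact norm_eulerFactor_le_one (mod_cast p.prop.two_le)
      (χ.norm_apply_prime_of_not_dvd p.prop hpd)

lemma norm_achiFactor_lt_one {p : Nat.Primes} (hpd : ¬ (p : ℕ) ∣ d) (hχp : χ p ≠ 1) :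
    ‖χ.achiFactor p‖ < 1 := by
  unfold achiFactor
  rw [if_neg hpd]
  exact norm_eulerFactor_lt_one (mod_cast p.prop.two_le)
    (χ.norm_apply_prime_of_not_dvd p.prop hpd) hχp

lemma norm_achiFactor_sub_one_le (p : Nat.Primes) : ‖χ.achiFactor p - 1‖ ≤ 6 / (p : ℝ) ^ 2 := by
  unfold achiFactor
  split_ifs with hpd
  · simp only [sub_self, norm_zero]
    positivity
  · exact norm_eulerFactor_sub_one_le (mod_cast p.prop.two_le)
      (χ.norm_apply_prime_of_not_dvd p.prop hpd)

lemma multipliable_achiFactor : Multipliable χ.achiFactor := by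
  have hsum : Summable fun p : Nat.Primes => 6 / (p : ℝ) ^ 2 := by
    simpa [div_eq_mul_inv, Real.rpow_neg, Real.rpow_two] using
      (Nat.Primes.summable_rpow (r := -2)).mpr (by norm_num) |>.mul_left 6
  simpa using Complex.multipliable_one_add_of_summable
    (hsum.of_norm_bounded χ.norm_achiFactor_sub_one_le)

end DirichletCharacter

/-- `|A_χ| ≤ 1`, with equality if and only if `χ` is the principal character mod `d`. -/
theorem abs_Achi_le_one (d : ℕ) (hd : 0 < d) (χ : DirichletCharacter ℂ d) :
    ‖Achi χ‖ ≤ 1 ∧ (‖Achi χ‖ = 1 ↔ χ = 1) := by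
  have : NeZero d := ⟨hd.ne'⟩
  have hle (p : Nat.Primes) : ‖Achi χ‖ ≤ ‖χ.achiFactor p‖ := by
    rw [χ.Achi_eq_tprod]
    exact norm_tprod_le_norm_of_norm_le_one χ.multipliable_achiFactor χ.norm_achiFactor_le_one p
  refine ⟨(hle ⟨2, Nat.prime_two⟩).trans (χ.norm_achiFactor_le_one _), fun h => ?_, fun h => ?_⟩
  · by_contra hχ
    obtain ⟨p, hp, hpd, hχp⟩ := χ.exists_prime_apply_ne_one hχ
    linarith [hle ⟨p, hp⟩, χ.norm_achiFactor_lt_one (p := ⟨p, hp⟩) hpd hχp]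
  · simp [h, DirichletCharacter.Achi_eq_tprod]
end

section
/- Let f(z) = Σ_{j ≥ 1} a(j)·z^j be a formal power series with integer coefficients and zero constant term. For each integer r ≥ 1 define the formal power series H^{(r)}(z) = (1/r)·Σ_{d | r} μ(d)·f(z^d)^{r/d}, a priori with rational coefficients, where μ is the Möbius function and f(z^d) denotes the substitution of z^d for z in f. Then every coefficient of H^{(r)} is an integer. -/
/-!
Let `y e` be the `j`-th coefficient of `f(z^e)^(r/e)`, an integer; then `r` times the
`j`-th coefficient of `H^{(r)}` is `∑_{e ∣ r} μ(e) y(e)`, and it suffices that every prime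
power `p^k ∣ r` divides this sum. Only squarefree `e` contribute, so the divisors pair up as
`d, p d` with `p ∤ d`, and the sum becomes `∑_{d ∣ r, p ∤ d} μ(d) (y(d) - y(p d))`. Each
difference is divisible by `p^k`: with `g = f(z^d)` and `r/d = p^k m` it is a coefficient of
`g^(p^k m) - g(z^p)^(p^(k-1) m)`, and `g^p ≡ g(z^p) mod p` (Frobenius over `𝔽_p`) lifts to
`g^(p^k) ≡ g(z^p)^(p^(k-1)) mod p^k`.
-/

open PowerSeries Finset
open scoped ArithmeticFunction.Moebius

section Moebius

theorem moebius_prime_mul {p : ℕ} (hp : p.Prime) (d : ℕ) :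
    μ (p * d) = if p ∣ d then 0 else -μ d := by
  split_ifs with hpd
  · refine ArithmeticFunction.moebius_eq_zero_of_not_squarefree fun hsq => hp.ne_one ?_
    exact (Nat.squarefree_mul_iff.mp hsq).1.eq_one_of_dvd hpd
  · rw [ArithmeticFunction.isMultiplicative_moebius.map_mul_of_coprime
      ((hp.coprime_iff_not_dvd).mpr hpd), ArithmeticFunction.moebius_apply_prime hp,
      neg_one_mul]

variable {p : ℕ} (hp : p.Prime) (n : ℕ)
include hp

theorem filter_dvd_divisors_prime_mul :
    {e ∈ (p * n).divisors | p ∣ e} =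
      n.divisors.map ⟨(p * ·), mul_right_injective₀ hp.ne_zero⟩ := by
  ext e
  simp only [mem_filter, mem_map, Nat.mem_divisors, Function.Embedding.coeFn_mk]
  constructor
  · rintro ⟨⟨he, hpn⟩, d, rfl⟩
    exact ⟨d, ⟨Nat.dvd_of_mul_dvd_mul_left hp.pos he, right_ne_zero_of_mul hpn⟩, rfl⟩
  · rintro ⟨d, ⟨hd, hn⟩, rfl⟩
    exact ⟨⟨mul_dvd_mul_left p hd, mul_ne_zero hp.ne_zero hn⟩, dvd_mul_right p d⟩

theorem filter_not_dvd_divisors_prime_mul :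
    {e ∈ (p * n).divisors | ¬ p ∣ e} = {d ∈ n.divisors | ¬ p ∣ d} := by
  ext e
  simp only [mem_filter, Nat.mem_divisors, mul_ne_zero_iff, ne_eq, hp.ne_zero, not_false_eq_true,
    true_and, and_congr_left_iff]
  exact fun hpe _ =>
    Nat.Coprime.dvd_mul_left (Nat.coprime_comm.mp ((hp.coprime_iff_not_dvd).mpr hpe))

theorem sum_divisors_prime_mul_moebius_smul {M : Type*} [AddCommGroup M] (y : ℕ → M) :
    ∑ e ∈ (p * n).divisors, μ e • y e =
      ∑ d ∈ n.divisors with ¬ p ∣ d, μ d • (y d - y (p * d)) := by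
  have hmultiples : ∑ e ∈ (p * n).divisors with p ∣ e, μ e • y e =
      ∑ d ∈ n.divisors with ¬ p ∣ d, -(μ d • y (p * d)) := by
    rw [filter_dvd_divisors_prime_mul hp, sum_map, sum_filter]
    refine sum_congr rfl fun d _ => ?_
    simp only [Function.Embedding.coeFn_mk, moebius_prime_mul hp]
    split_ifs <;> simp
  rw [← sum_filter_add_sum_filter_not _ (p ∣ ·), hmultiples,
    filter_not_dvd_divisors_prime_mul hp, ← sum_add_distrib]
  exact sum_congr rfl fun d _ => by rw [smul_sub]; abel

end Moebius

theorem natCast_dvd_sum_moebius_mul_of_dvd_sub {r : ℕ} (y : ℕ → ℤ)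
    (hy : ∀ p k d, p.Prime → p ^ k ∣ r → d ∣ r → ¬ p ∣ d →
      (p : ℤ) ^ k ∣ y d - y (p * d)) :
    (r : ℤ) ∣ ∑ e ∈ r.divisors, μ e * y e := by
  rw [Int.natCast_dvd, Nat.dvd_iff_prime_pow_dvd_dvd]
  intro p k hp hk
  rw [← Int.natCast_dvd, Nat.cast_pow]
  cases k with
  | zero => exact pow_zero (p : ℤ) ▸ one_dvd _
  | succ k =>
    obtain ⟨n, rfl⟩ : p ∣ r := (dvd_pow_self p k.succ_ne_zero).trans hk
    have hsplit := sum_divisors_prime_mul_moebius_smul hp n y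
    simp only [smul_eq_mul] at hsplit
    rw [hsplit]
    refine dvd_sum fun d hd => ?_
    rw [mem_filter] at hd
    exact (hy p _ d hp hk ((Nat.dvd_of_mem_divisors hd.1).mul_left p) hd.2).mul_left _

namespace PowerSeries

section

variable {R : Type*} [CommRing R]

theorem C_dvd_iff_forall_dvd_coeff (c : R) (f : R⟦X⟧) :
    C c ∣ f ↔ ∀ n, c ∣ coeff n f := by
  refine ⟨fun ⟨g, hg⟩ n => ⟨coeff n g, by rw [hg, coeff_C_mul]⟩, fun h => ?_⟩
  choose g hg using h
  exact ⟨mk g, ext fun n => by rw [coeff_C_mul, coeff_mk, hg]⟩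

/-- `f(z^e)` for `f = mk a`; unlike `expand`, it is defined for every `e`, so that it can be
indexed by divisors without carrying proofs of `e ≠ 0`. -/
noncomputable def mkExpand (e : ℕ) (a : ℕ → R) : R⟦X⟧ :=
  mk fun i => if e ∣ i then a (i / e) else 0

theorem map_mkExpand {S : Type*} [CommRing S] (φ : R →+* S) (e : ℕ) (a : ℕ → R) :
    map φ (mkExpand e a) = mkExpand e (φ ∘ a) := by
  ext i
  simp [mkExpand, coeff_map, apply_ite φ]

theorem mkExpand_eq_expand {e : ℕ} (he : e ≠ 0) (a : ℕ → R) :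
    mkExpand e a = expand e he (mk a) := by
  ext i
  simp [mkExpand, coeff_expand]

theorem mkExpand_mul {p d : ℕ} (hp : p ≠ 0) (hd : d ≠ 0) (a : ℕ → R) :
    mkExpand (p * d) a = expand p hp (mkExpand d a) := by
  rw [mkExpand_eq_expand (mul_ne_zero hp hd), mkExpand_eq_expand hd, expand_mul]

end

theorem pow_eq_expand_zmod {p : ℕ} [Fact p.Prime] (f : (ZMod p)⟦X⟧) :
    f ^ p = expand p (NeZero.ne p) f := by
  have := MvPowerSeries.map_frobenius_expand p (NeZero.ne p) (f := f)
  rw [ZMod.frobenius_zmod, MvPowerSeries.map_id] at this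
  exact this.symm

variable {p : ℕ} (hp : p.Prime)
include hp

theorem natCast_dvd_pow_sub_expand (f : ℤ⟦X⟧) :
    (p : ℤ⟦X⟧) ∣ f ^ p - expand p hp.ne_zero f := by
  have := Fact.mk hp
  rw [← map_natCast (C (R := ℤ)), C_dvd_iff_forall_dvd_coeff]
  intro n
  rw [← ZMod.intCast_zmod_eq_zero_iff_dvd, ← eq_intCast (Int.castRingHom (ZMod p)),
    ← coeff_map, map_sub, map_pow, map_expand, ← pow_eq_expand_zmod, sub_self, map_zero]

theorem natCast_pow_dvd_pow_sub_expand_pow (f : ℤ⟦X⟧) (k m : ℕ) :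
    (p : ℤ⟦X⟧) ^ (k + 1) ∣ f ^ (p ^ (k + 1) * m) - expand p hp.ne_zero f ^ (p ^ k * m) := by
  rw [show p ^ (k + 1) * m = p * p ^ k * m by ring, pow_mul, pow_mul, pow_mul]
  exact (dvd_sub_pow_of_dvd_sub (natCast_dvd_pow_sub_expand hp f) k).trans
    (sub_dvd_pow_sub_pow _ _ m)

theorem prime_pow_dvd_coeff_mkExpand_pow_sub (a : ℕ → ℤ) {k d r : ℕ} (hk : p ^ k ∣ r)
    (hd : d ∣ r) (hpd : ¬ p ∣ d) (n : ℕ) :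
    (p : ℤ) ^ k ∣
      coeff n (mkExpand d a ^ (r / d)) - coeff n (mkExpand (p * d) a ^ (r / (p * d))) := by
  cases k with
  | zero => simp
  | succ k =>
    have hd0 : d ≠ 0 := by rintro rfl; exact hpd (dvd_zero p)
    obtain ⟨m, rfl⟩ : p ^ (k + 1) * d ∣ r :=
      (Nat.Coprime.pow_left _ ((hp.coprime_iff_not_dvd).mpr hpd)).mul_dvd_of_dvd_of_dvd hk hd
    have hdiv : p ^ (k + 1) * d * m / d = p ^ (k + 1) * m := by
      rw [mul_right_comm, Nat.mul_div_cancel _ (Nat.pos_of_ne_zero hd0)]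
    have hdiv' : p ^ (k + 1) * d * m / (p * d) = p ^ k * m := by
      rw [show p ^ (k + 1) * d * m = p ^ k * m * (p * d) by ring,
        Nat.mul_div_cancel _ (Nat.mul_pos hp.pos (Nat.pos_of_ne_zero hd0))]
    have key := natCast_pow_dvd_pow_sub_expand_pow hp (mkExpand d a) k m
    rw [← map_natCast (C (R := ℤ)), ← map_pow, C_dvd_iff_forall_dvd_coeff] at key
    simpa [hdiv, hdiv', mkExpand_mul hp.ne_zero hd0] using key n

end PowerSeries

theorem coeff_H_isInt_general (a : ℕ → ℤ)
    (fsub : ℕ → PowerSeries ℚ)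
    (hfsub : ∀ e : ℕ, fsub e =
      PowerSeries.mk (fun i : ℕ => if e ∣ i then (a (i / e) : ℚ) else 0))
    (r : ℕ)
    (H : PowerSeries ℚ)
    (hH : H = (1 / (r : ℚ)) •
      ∑ e ∈ r.divisors, (ArithmeticFunction.moebius e : ℚ) • (fsub e) ^ (r / e)) :
    ∀ j : ℕ, ∃ k : ℤ, PowerSeries.coeff (R := ℚ) j H = (k : ℚ) := by
  intro j
  set y : ℕ → ℤ := fun e => coeff j (mkExpand e a ^ (r / e))
  have hfsub' : ∀ e, fsub e = map (Int.castRingHom ℚ) (mkExpand e a) := fun e => by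
    rw [hfsub, map_mkExpand]; rfl
  have hcoeff : coeff j H = (1 / r : ℚ) * ((∑ e ∈ r.divisors, μ e * y e : ℤ) : ℚ) := by
    simp [hH, hfsub', ← map_pow, coeff_map, y]
  obtain ⟨c, hc⟩ : (r : ℤ) ∣ ∑ e ∈ r.divisors, μ e * y e :=
    natCast_dvd_sum_moebius_mul_of_dvd_sub y fun p k d hp hk hd hpd =>
      prime_pow_dvd_coeff_mkExpand_pow_sub hp a hk hd hpd j
  rcases eq_or_ne r 0 with rfl | hr
  · exact ⟨0, by simp [hcoeff]⟩
  · exact ⟨c, by rw [hcoeff, hc]; push_cast; field_simp⟩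

/-- Let `f(z) = Σ_{j ≥ 1} a(j)·z^j` be a formal power series with integer coefficients
and zero constant term, and for `e ≥ 1` let `fsub e` denote `f(z^e)`. Then for every
`r ≥ 1`, all coefficients of `H^{(r)}(z) = (1/r)·Σ_{e | r} μ(e)·f(z^e)^{r/e}` are
integers. -/
theorem coeff_H_isInt (a : ℕ → ℤ) (ha0 : a 0 = 0)
    (fsub : ℕ → PowerSeries ℚ)
    (hfsub : ∀ e : ℕ, fsub e =
      PowerSeries.mk (fun i : ℕ => if e ∣ i then (a (i / e) : ℚ) else 0))
    (r : ℕ) (hr : 1 ≤ r)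
    (H : PowerSeries ℚ)
    (hH : H = (1 / (r : ℚ)) •
      ∑ e ∈ r.divisors, (ArithmeticFunction.moebius e : ℚ) • (fsub e) ^ (r / e)) :
    ∀ j : ℕ, ∃ k : ℤ, PowerSeries.coeff (R := ℚ) j H = (k : ℚ) :=
  coeff_H_isInt_general a fsub hfsub r H hH
end
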